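/- Let (X,T) be a topological dynamical system and f ∈ C(X,ℝ). Then for each x ∈ X and ε > 0, P_s(T,f,x,ε) = sup_{𝒰} limsup_{n→∞} (1/n) log P_n(T,f,𝒰,T^{-n}W^s_ε(x,T)), where the supremum is over all finite open covers 𝒰 of X. -/

import Mathlib

open Filter Set Topology MeasureTheory

noncomputable section

variable {X : Type*}

/-- Birkhoff sum `f_n(x) = ∑_{j<n} f(T^j x)`. -/
def birk (T : X → X) (f : X → ℝ) (n : ℕ) (x : X) : ℝ :=
  ∑ j ∈ Finset.range n, f (T^[j] x)

/-- `P_n(T,f,δ,K)`: supremum of `∑_{x∈E} exp f_n(x)` over `(n,δ)`-separated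
subsets `E ⊆ K`. -/
def sepPn [MetricSpace X] (T : X → X) (f : X → ℝ) (n : ℕ) (δ : ℝ) (K : Set X) : ℝ :=
  sSup { r : ℝ | ∃ E : Finset X, ↑E ⊆ K ∧
    (∀ x ∈ E, ∀ y ∈ E, x ≠ y → ∃ i < n, δ < dist (T^[i] x) (T^[i] y)) ∧
    r = ∑ x ∈ E, Real.exp (birk T f n x) }

/-- The topological pressure of `T` for the subset `K`:
`P(T,f,K) = lim_{δ→0} limsup_n (1/n) log P_n(T,f,δ,K)`; since the expression is
nonincreasing in `δ`, the limit is the supremum over `δ > 0`. -/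
def pres [MetricSpace X] (T : X → X) (f : X → ℝ) (K : Set X) : EReal :=
  ⨆ (δ : ℝ) (_ : 0 < δ), atTop.limsup fun n : ℕ =>
    ((Real.log (sepPn T f n δ K) / n : ℝ) : EReal)

/-- The `ε`-stable set `W^s_ε(x,T)`. -/
def epsStable [MetricSpace X] (T : X → X) (ε : ℝ) (x : X) : Set X :=
  { y | ∀ n : ℕ, dist (T^[n] x) (T^[n] y) ≤ ε }

/-- The topological pressure of the preimages of the `ε`-stable set of `x`:
`P_s(T,f,x,ε) = lim_{δ→0} limsup_n (1/n) log P_n(T,f,δ,T^{-n}W^s_ε(x,T))`. -/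
def Ps [MetricSpace X] (T : X → X) (f : X → ℝ) (x : X) (ε : ℝ) : EReal :=
  ⨆ (δ : ℝ) (_ : 0 < δ), atTop.limsup fun n : ℕ =>
    ((Real.log (sepPn T f n δ ((T^[n]) ⁻¹' epsStable T ε x)) / n : ℝ) : EReal)

/-- A finite open cover of `X`. -/
def IsOpenCover [TopologicalSpace X] (𝒰 : Finset (Set X)) : Prop :=
  (∀ U ∈ 𝒰, IsOpen U) ∧ ⋃₀ (𝒰 : Set (Set X)) = univ

/-- A finite Borel cover of `X`. -/
def IsBorelCover [MeasurableSpace X] (𝒱 : Finset (Set X)) : Prop :=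
  (∀ V ∈ 𝒱, MeasurableSet V) ∧ ⋃₀ (𝒱 : Set (Set X)) = univ

/-- `𝒱` refines the iterated cover `𝒰_0^{n-1} = ⋁_{i<n} T^{-i}𝒰`. -/
def RefinesIter (T : X → X) (𝒰 : Finset (Set X)) (n : ℕ) (𝒱 : Finset (Set X)) : Prop :=
  ∀ V ∈ 𝒱, ∃ g : Fin n → Set X, (∀ i, g i ∈ 𝒰) ∧ V ⊆ ⋂ i : Fin n, (T^[(i : ℕ)]) ⁻¹' g i

/-- `P_n(T,f,𝒰,K)`: infimum over finite Borel covers `𝒱` refining `𝒰_0^{n-1}` of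
`∑_{V∈𝒱} sup_{x ∈ V∩K} exp f_n(x)` (an empty summand contributes `0`, which is
`Real.sSup ∅`). -/
def covPn [MeasurableSpace X] (T : X → X) (f : X → ℝ) (𝒰 : Finset (Set X)) (n : ℕ)
    (K : Set X) : ℝ :=
  sInf { r : ℝ | ∃ 𝒱 : Finset (Set X), IsBorelCover 𝒱 ∧ RefinesIter T 𝒰 n 𝒱 ∧
    r = ∑ V ∈ 𝒱, sSup ((fun x => Real.exp (birk T f n x)) '' (V ∩ K)) }

/-- A finite Borel partition of `X`. -/
def IsFinPartition [MeasurableSpace X] (α : Finset (Set X)) : Prop :=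
  (∀ A ∈ α, MeasurableSet A) ∧ ⋃₀ (α : Set (Set X)) = univ ∧
    (α : Set (Set X)).Pairwise Disjoint

/-- `H_μ(⋁_{i<n} T^{-i}α)`, computed over all atoms `⋂_{i<n} T^{-i} A_i`. -/
def dynH [MeasurableSpace X] (μ : Measure X) (T : X → X) (α : Finset (Set X)) (n : ℕ) : ℝ :=
  ∑ g : Fin n → α, Real.negMulLog ((μ (⋂ i : Fin n, (T^[(i : ℕ)]) ⁻¹' (g i : Set X))).toReal)

/-- `h_μ(T,α) = lim_n (1/n) H_μ(α_0^{n-1})`, which for an invariant measure equals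
the infimum of `(1/n) H_μ(α_0^{n-1})` over `n ≥ 1`. -/
def entPart [MeasurableSpace X] (μ : Measure X) (T : X → X) (α : Finset (Set X)) : ℝ :=
  ⨅ n : ℕ, dynH μ T α (n + 1) / (n + 1 : ℝ)

/-- The measure-theoretic entropy `h_μ(T)`. -/
def mEnt [MeasurableSpace X] (μ : Measure X) (T : X → X) : EReal :=
  ⨆ (α : Finset (Set X)) (_ : IsFinPartition α), ((entPart μ T α : ℝ) : EReal)

/-- The measure-theoretic pressure `P_μ(T,f) = h_μ(T) + ∫ f dμ`. -/
def mPres [MeasurableSpace X] (μ : Measure X) (T : X → X) (f : X → ℝ) : EReal :=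
  mEnt μ T + ((∫ x, f x ∂μ : ℝ) : EReal)

/-- The stable set `W^s(x,T)`. -/
def stableSet [MetricSpace X] (T : X → X) (x : X) : Set X :=
  { y | Tendsto (fun n : ℕ => dist (T^[n] x) (T^[n] y)) atTop (𝓝 0) }

/-- A Cantor set: a nonempty compact perfect totally disconnected set. -/
def IsCantorSet [TopologicalSpace X] (C : Set X) : Prop :=
  C.Nonempty ∧ IsCompact C ∧ Perfect C ∧ IsTotallyDisconnected C

/-- A weakly mixing set for `T`. -/
def IsWeaklyMixingSet [TopologicalSpace X] (T : X → X) (A : Set X) : Prop :=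
  A.Nonempty ∧ IsClosed A ∧
  ∃ B : Set X, B ⊆ A ∧
    (∃ C : ℕ → Set X, (∀ n, IsCantorSet (C n)) ∧ B = ⋃ n, C n) ∧
    closure B = A ∧
    ∀ C : Set X, C ⊆ B → IsCantorSet C →
      ∀ g : C → X, Continuous g → (∀ c : C, g c ∈ A) →
        ∃ φ : ℕ → ℕ, StrictMono φ ∧
          ∀ c : C, Tendsto (fun i => T^[φ i] (c : X)) atTop (𝓝 (g c))

/-!
If every member of `𝒰` has diameter at most `δ`, a member of a cover refining
`𝒰_0^{n-1}` contains at most one point of an `(n,δ)`-separated set, so `P_n(δ) ≤ P_n(𝒰)`.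
Conversely, given `𝒰` and `η > 0`, choose `r` below a Lebesgue number of `𝒰` and below the
`η`-modulus of uniform continuity of `f`. A maximal `(n, r/2)`-separated subset `E` of `K` is
`(n, r/2)`-spanning, so the Bowen balls `B_n(x, r)`, `x ∈ E`, cover `K`; together with the atoms
of `𝒰_0^{n-1}` minus their union (which miss `K`) they form a Borel cover refining `𝒰_0^{n-1}`,
and on `B_n(x, r)` the Birkhoff sum exceeds `f_n(x)` by at most `nη`. Hence
`P_n(𝒰) ≤ e^{nη} P_n(r/2)`, and `η → 0` gives the other inequality.
-/

section BirkhoffSum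

/-- `sup_{x ∈ S} exp f_n(x)`, the summand of `covPn` (with `S = V ∩ K`); it is `0` for `S = ∅`. -/
def supExpBirk (T : X → X) (f : X → ℝ) (n : ℕ) (S : Set X) : ℝ :=
  sSup ((fun x => Real.exp (birk T f n x)) '' S)

lemma supExpBirk_nonneg (T : X → X) (f : X → ℝ) (n : ℕ) (S : Set X) :
    0 ≤ supExpBirk T f n S :=
  Real.sSup_nonneg (by rintro _ ⟨y, -, rfl⟩; exact (Real.exp_pos _).le)

lemma supExpBirk_le {T : X → X} {f : X → ℝ} {n : ℕ} {S : Set X} {c : ℝ}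
    (h : ∀ y ∈ S, birk T f n y ≤ c) : supExpBirk T f n S ≤ Real.exp c :=
  Real.sSup_le (by rintro _ ⟨y, hy, rfl⟩; exact Real.exp_le_exp.2 (h y hy)) (Real.exp_pos c).le

lemma birk_le_of_forall_le_add {T : X → X} {f : X → ℝ} {n : ℕ} {x y : X} {η : ℝ}
    (h : ∀ i < n, f (T^[i] y) ≤ f (T^[i] x) + η) : birk T f n y ≤ birk T f n x + n * η := by
  calc birk T f n y ≤ ∑ i ∈ Finset.range n, (f (T^[i] x) + η) :=
        Finset.sum_le_sum fun i hi => h i (Finset.mem_range.1 hi)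
    _ = birk T f n x + n * η := by simp [birk, Finset.sum_add_distrib]

variable [TopologicalSpace X] [CompactSpace X]

lemma birk_le_mul_norm (T : X → X) (f : C(X, ℝ)) (n : ℕ) (x : X) : birk T f n x ≤ n * ‖f‖ := by
  calc birk T f n x ≤ ∑ _i ∈ Finset.range n, ‖f‖ :=
        Finset.sum_le_sum fun i _ => (Real.le_norm_self _).trans (f.norm_coe_le_norm _)
    _ = n * ‖f‖ := by simp

lemma exp_birk_le_supExpBirk (T : X → X) (f : C(X, ℝ)) (n : ℕ) {S : Set X} {y : X}
    (hy : y ∈ S) : Real.exp (birk T f n y) ≤ supExpBirk T f n S :=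
  le_csSup ⟨Real.exp (n * ‖f‖), by
    rintro _ ⟨z, -, rfl⟩; exact Real.exp_le_exp.2 (birk_le_mul_norm T f n z)⟩ ⟨y, hy, rfl⟩

lemma sum_exp_birk_le_sum_supExpBirk (T : X → X) (f : C(X, ℝ)) (n : ℕ) {𝒱 : Finset (Set X)}
    (h𝒱 : ⋃₀ (𝒱 : Set (Set X)) = univ) {E : Finset X} {K : Set X} (hEK : ↑E ⊆ K)
    (hE : ∀ V ∈ 𝒱, (V ∩ E).Subsingleton) :
    ∑ x ∈ E, Real.exp (birk T f n x) ≤ ∑ V ∈ 𝒱, supExpBirk T f n (V ∩ K) := by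
  have hmem : ∀ z : X, ∃ V ∈ 𝒱, z ∈ V := fun z => h𝒱.ge (mem_univ z)
  choose c hc𝒱 hzc using hmem
  have hinj : Set.InjOn c E := fun a ha b hb hab =>
    hE (c a) (hc𝒱 a) ⟨hzc a, ha⟩ ⟨hab ▸ hzc b, hb⟩
  calc ∑ x ∈ E, Real.exp (birk T f n x) ≤ ∑ x ∈ E, supExpBirk T f n (c x ∩ K) :=
        Finset.sum_le_sum fun x hx => exp_birk_le_supExpBirk T f n ⟨hzc x, hEK hx⟩
    _ = ∑ V ∈ E.image c, supExpBirk T f n (V ∩ K) :=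
        (Finset.sum_image (f := fun V => supExpBirk T f n (V ∩ K)) hinj).symm
    _ ≤ ∑ V ∈ 𝒱, supExpBirk T f n (V ∩ K) :=
        Finset.sum_le_sum_of_subset_of_nonneg (Finset.image_subset_iff.2 fun x _ => hc𝒱 x)
          fun _ _ _ => supExpBirk_nonneg T f n _

end BirkhoffSum

section Covers

def atomCover (T : X → X) (𝒰 : Finset (Set X)) (n : ℕ) : Finset (Set X) :=
  Finset.univ.image fun g : Fin n → 𝒰 => ⋂ i : Fin n, (T^[(i : ℕ)]) ⁻¹' (g i : Set X)

lemma mem_atomCover {T : X → X} {𝒰 : Finset (Set X)} {n : ℕ} {A : Set X} :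
    A ∈ atomCover T 𝒰 n ↔ ∃ g : Fin n → 𝒰, ⋂ i : Fin n, (T^[(i : ℕ)]) ⁻¹' (g i : Set X) = A := by
  simp [atomCover]

lemma refinesIter_atomCover (T : X → X) (𝒰 : Finset (Set X)) (n : ℕ) :
    RefinesIter T 𝒰 n (atomCover T 𝒰 n) := by
  intro A hA
  obtain ⟨g, rfl⟩ := mem_atomCover.1 hA
  exact ⟨fun i => g i, fun i => (g i).2, subset_rfl⟩

lemma sUnion_atomCover (T : X → X) {𝒰 : Finset (Set X)} (h𝒰 : ⋃₀ (𝒰 : Set (Set X)) = univ)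
    (n : ℕ) : ⋃₀ (atomCover T 𝒰 n : Set (Set X)) = univ := by
  refine eq_univ_of_forall fun z => ?_
  have hmem : ∀ i : Fin n, ∃ U : 𝒰, T^[(i : ℕ)] z ∈ (U : Set X) := fun i => by
    obtain ⟨U, hU, hzU⟩ := h𝒰.ge (mem_univ (T^[(i : ℕ)] z))
    exact ⟨⟨U, hU⟩, hzU⟩
  choose g hg using hmem
  exact ⟨_, mem_atomCover.2 ⟨g, rfl⟩, mem_iInter.2 hg⟩

lemma isOpen_of_mem_atomCover {T : X → X} [TopologicalSpace X] (hT : Continuous T)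
    {𝒰 : Finset (Set X)} (h𝒰 : ∀ U ∈ 𝒰, IsOpen U) {n : ℕ} {A : Set X}
    (hA : A ∈ atomCover T 𝒰 n) : IsOpen A := by
  obtain ⟨g, rfl⟩ := mem_atomCover.1 hA
  exact isOpen_iInter_of_finite fun i => (h𝒰 _ (g i).2).preimage (hT.iterate i)

lemma IsOpenCover.isBorelCover_atomCover [TopologicalSpace X] [MeasurableSpace X]
    [OpensMeasurableSpace X] {T : X → X} (hT : Continuous T) {𝒰 : Finset (Set X)}
    (h𝒰 : IsOpenCover 𝒰) (n : ℕ) : IsBorelCover (atomCover T 𝒰 n) :=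
  ⟨fun _ hA => (isOpen_of_mem_atomCover hT h𝒰.1 hA).measurableSet, sUnion_atomCover T h𝒰.2 n⟩

lemma RefinesIter.union [DecidableEq (Set X)] {T : X → X} {𝒰 𝒱 𝒲 : Finset (Set X)} {n : ℕ}
    (h𝒱 : RefinesIter T 𝒰 n 𝒱) (h𝒲 : RefinesIter T 𝒰 n 𝒲) : RefinesIter T 𝒰 n (𝒱 ∪ 𝒲) :=
  fun V hV => (Finset.mem_union.1 hV).elim (h𝒱 V) (h𝒲 V)

lemma RefinesIter.image_diff [DecidableEq (Set X)] {T : X → X} {𝒰 𝒱 : Finset (Set X)} {n : ℕ}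
    (h𝒱 : RefinesIter T 𝒰 n 𝒱) (S : Set X) : RefinesIter T 𝒰 n (𝒱.image (· \ S)) := by
  intro V hV
  obtain ⟨A, hA, rfl⟩ := Finset.mem_image.1 hV
  obtain ⟨g, hg𝒰, hAg⟩ := h𝒱 A hA
  exact ⟨g, hg𝒰, sdiff_subset.trans hAg⟩

end Covers

section CoverPressure

variable [MeasurableSpace X] {T : X → X} {𝒰 : Finset (Set X)} {n : ℕ}

lemma covPn_le (f : X → ℝ) {𝒱 : Finset (Set X)} {K : Set X}
    (h𝒱 : IsBorelCover 𝒱) (h𝒱𝒰 : RefinesIter T 𝒰 n 𝒱) :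
    covPn T f 𝒰 n K ≤ ∑ V ∈ 𝒱, supExpBirk T f n (V ∩ K) :=
  csInf_le ⟨0, by
    rintro _ ⟨𝒱', -, -, rfl⟩; exact Finset.sum_nonneg fun _ _ => supExpBirk_nonneg T f n _⟩
    ⟨𝒱, h𝒱, h𝒱𝒰, rfl⟩

variable [TopologicalSpace X] [OpensMeasurableSpace X]

lemma le_covPn (hT : Continuous T) (f : X → ℝ) (h𝒰 : IsOpenCover 𝒰) {K : Set X} {c : ℝ}
    (h : ∀ 𝒱, IsBorelCover 𝒱 → RefinesIter T 𝒰 n 𝒱 → c ≤ ∑ V ∈ 𝒱, supExpBirk T f n (V ∩ K)) :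
    c ≤ covPn T f 𝒰 n K :=
  le_csInf ⟨_, _, h𝒰.isBorelCover_atomCover hT n, refinesIter_atomCover T 𝒰 n, rfl⟩
    (by rintro _ ⟨𝒱, h𝒱, h𝒱𝒰, rfl⟩; exact h 𝒱 h𝒱 h𝒱𝒰)

lemma IsOpenCover.isBorelCover_union_atomCover_diff [DecidableEq (Set X)] (hT : Continuous T)
    (h𝒰 : IsOpenCover 𝒰) {𝒲 : Finset (Set X)} (h𝒲 : ∀ V ∈ 𝒲, MeasurableSet V) :
    IsBorelCover (𝒲 ∪ (atomCover T 𝒰 n).image (· \ ⋃₀ (𝒲 : Set (Set X)))) := by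
  have hW : MeasurableSet (⋃₀ (𝒲 : Set (Set X))) :=
    MeasurableSet.sUnion 𝒲.countable_toSet h𝒲
  refine ⟨fun V hV => ?_, eq_univ_of_forall fun z => ?_⟩
  · rcases Finset.mem_union.1 hV with hV | hV
    · exact h𝒲 V hV
    · obtain ⟨A, hA, rfl⟩ := Finset.mem_image.1 hV
      exact (isOpen_of_mem_atomCover hT h𝒰.1 hA).measurableSet.diff hW
  · by_cases hz : z ∈ ⋃₀ (𝒲 : Set (Set X))
    · obtain ⟨V, hV, hzV⟩ := hz
      exact ⟨V, Finset.mem_union_left _ hV, hzV⟩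
    · obtain ⟨A, hA, hzA⟩ := (sUnion_atomCover T h𝒰.2 n).ge (mem_univ z)
      exact ⟨A \ _, Finset.mem_union_right _ (Finset.mem_image_of_mem _ hA), hzA, hz⟩

/-- The atoms of `𝒰_0^{n-1}` minus `⋃₀ 𝒲` complete `𝒲` to a Borel cover, and they miss `K`. -/
lemma covPn_le_sum_of_subset_sUnion (hT : Continuous T) (f : X → ℝ) (h𝒰 : IsOpenCover 𝒰)
    {𝒲 : Finset (Set X)} (h𝒲 : ∀ V ∈ 𝒲, MeasurableSet V) (h𝒲𝒰 : RefinesIter T 𝒰 n 𝒲)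
    {K : Set X} (hK : K ⊆ ⋃₀ (𝒲 : Set (Set X))) :
    covPn T f 𝒰 n K ≤ ∑ V ∈ 𝒲, supExpBirk T f n (V ∩ K) := by
  set 𝒜 := (atomCover T 𝒰 n).image (· \ ⋃₀ (𝒲 : Set (Set X)))
  have h𝒜 : ∀ V ∈ 𝒜, supExpBirk T f n (V ∩ K) = 0 := by
    intro V hV
    obtain ⟨A, -, rfl⟩ := Finset.mem_image.1 hV
    have hAK : (A \ ⋃₀ (𝒲 : Set (Set X))) ∩ K = ∅ :=
      eq_empty_of_forall_notMem fun z hz => hz.1.2 (hK hz.2)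
    rw [hAK, supExpBirk, image_empty, Real.sSup_empty]
  calc covPn T f 𝒰 n K ≤ ∑ V ∈ 𝒲 ∪ 𝒜, supExpBirk T f n (V ∩ K) :=
        covPn_le f (h𝒰.isBorelCover_union_atomCover_diff hT h𝒲)
          (h𝒲𝒰.union ((refinesIter_atomCover T 𝒰 n).image_diff _))
    _ = ∑ V ∈ 𝒲, supExpBirk T f n (V ∩ K) :=
        (Finset.sum_subset Finset.subset_union_left fun V hV hV𝒲 =>
          h𝒜 V ((Finset.mem_union.1 hV).resolve_left hV𝒲)).symm

end CoverPressure

section Separated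

variable [MetricSpace X]

def IsDynSeparated (T : X → X) (n : ℕ) (δ : ℝ) (E : Finset X) : Prop :=
  ∀ x ∈ E, ∀ y ∈ E, x ≠ y → ∃ i < n, δ < dist (T^[i] x) (T^[i] y)

lemma isDynSeparated_singleton (T : X → X) (n : ℕ) (δ : ℝ) (x : X) :
    IsDynSeparated T n δ {x} := by
  simp +contextual [IsDynSeparated]

lemma IsDynSeparated.insert [DecidableEq X] {T : X → X} {n : ℕ} {δ : ℝ} {E : Finset X}
    (hE : IsDynSeparated T n δ E) {y : X}
    (hy : ∀ x ∈ E, ∃ i < n, δ < dist (T^[i] x) (T^[i] y)) :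
    IsDynSeparated T n δ (insert y E) := by
  intro a ha b hb hab
  rcases Finset.mem_insert.1 ha with rfl | ha' <;> rcases Finset.mem_insert.1 hb with rfl | hb'
  · exact absurd rfl hab
  · simpa only [dist_comm] using hy b hb'
  · exact hy a ha'
  · exact hE a ha' b hb' hab

lemma IsDynSeparated.subsingleton_inter {T : X → X} {n : ℕ} {δ : ℝ} {E : Finset X}
    (hE : IsDynSeparated T n δ E) {𝒰 𝒱 : Finset (Set X)}
    (hmesh : ∀ U ∈ 𝒰, ∀ a ∈ U, ∀ b ∈ U, dist a b ≤ δ) (h𝒱 : RefinesIter T 𝒰 n 𝒱) :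
    ∀ V ∈ 𝒱, (V ∩ E).Subsingleton := by
  rintro V hV a ⟨haV, haE⟩ b ⟨hbV, hbE⟩
  by_contra hab
  obtain ⟨i, hi, hlt⟩ := hE a haE b hbE hab
  obtain ⟨g, hg𝒰, hVg⟩ := h𝒱 V hV
  exact (hmesh _ (hg𝒰 ⟨i, hi⟩) _ (mem_iInter.1 (hVg haV) ⟨i, hi⟩) _
    (mem_iInter.1 (hVg hbV) ⟨i, hi⟩)).not_gt hlt

variable [CompactSpace X]

lemma exists_isOpenCover_forall_dist_le {δ : ℝ} (hδ : 0 < δ) :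
    ∃ 𝒰 : Finset (Set X), IsOpenCover 𝒰 ∧ ∀ U ∈ 𝒰, ∀ a ∈ U, ∀ b ∈ U, dist a b ≤ δ := by
  obtain ⟨t, -, ht, hcover⟩ := (isCompact_univ (X := X)).finite_cover_balls (half_pos hδ)
  refine ⟨ht.toFinset.image (Metric.ball · (δ / 2)), ⟨?_, ?_⟩, ?_⟩
  · simp only [Finset.mem_image]
    rintro _ ⟨z, -, rfl⟩
    exact Metric.isOpen_ball
  · simpa [sUnion_image, univ_subset_iff] using hcover
  · simp only [Finset.mem_image]
    rintro _ ⟨z, -, rfl⟩ a ha b hb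
    linarith [dist_triangle_right a b z, Metric.mem_ball.1 ha, Metric.mem_ball.1 hb]

lemma exists_card_le_of_isDynSeparated (T : X → X) {δ : ℝ} (hδ : 0 < δ) (n : ℕ) :
    ∃ N : ℕ, ∀ E : Finset X, IsDynSeparated T n δ E → E.card ≤ N := by
  obtain ⟨𝒰, h𝒰, hmesh⟩ := exists_isOpenCover_forall_dist_le (X := X) hδ
  refine ⟨(atomCover T 𝒰 n).card, fun E hE => ?_⟩
  refine Finset.card_le_card_of_forall_subsingleton (· ∈ ·)
    (fun x _ => (sUnion_atomCover T h𝒰.2 n).ge (mem_univ x)) fun V hV => ?_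
  exact (hE.subsingleton_inter hmesh (refinesIter_atomCover T 𝒰 n) V hV).anti
    fun x hx => ⟨hx.2, hx.1⟩

/-- A separated subset of `K` of maximal cardinality is spanning. -/
lemma exists_isDynSeparated_forall_dist_le (T : X → X) {δ : ℝ} (hδ : 0 < δ) (n : ℕ)
    (K : Set X) : ∃ E : Finset X, ↑E ⊆ K ∧ IsDynSeparated T n δ E ∧
      ∀ y ∈ K, ∃ x ∈ E, ∀ i < n, dist (T^[i] x) (T^[i] y) ≤ δ := by
  classical
  obtain ⟨N, hN⟩ := exists_card_le_of_isDynSeparated T hδ n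
  set P : Set (Finset X) := {E | ↑E ⊆ K ∧ IsDynSeparated T n δ E}
  have hbdd : BddAbove (Finset.card '' P) := ⟨N, by rintro _ ⟨E, hE, rfl⟩; exact hN E hE.2⟩
  have hne : (Finset.card '' P).Nonempty := ⟨0, ∅, ⟨by simp, by simp [IsDynSeparated]⟩, rfl⟩
  obtain ⟨E, ⟨hEK, hE⟩, hcard⟩ := Nat.sSup_mem hne hbdd
  refine ⟨E, hEK, hE, fun y hy => ?_⟩
  by_contra! hfar
  have hyE : y ∉ E := fun hyE => by
    obtain ⟨i, -, hi⟩ := hfar y hyE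
    linarith [dist_self (T^[i] y)]
  have hmax := le_csSup hbdd
    ⟨insert y E, ⟨by simpa [insert_subset_iff] using ⟨hy, hEK⟩, hE.insert hfar⟩, rfl⟩
  rw [Finset.card_insert_of_notMem hyE, ← hcard] at hmax
  omega

end Separated

section BowenBall

variable [MetricSpace X]

def bowenBall (T : X → X) (n : ℕ) (x : X) (r : ℝ) : Set X :=
  {y | ∀ i < n, dist (T^[i] x) (T^[i] y) < r}

lemma isOpen_bowenBall {T : X → X} (hT : Continuous T) (n : ℕ) (x : X) (r : ℝ) :
    IsOpen (bowenBall T n x r) := by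
  simp only [bowenBall, ofPred_forall]
  exact (finite_lt_nat n).isOpen_biInter fun i _ =>
    isOpen_lt (continuous_const.dist (hT.iterate i)) continuous_const

lemma exists_bowenBall_subset_iInter_preimage {T : X → X} {𝒰 : Finset (Set X)} {r : ℝ}
    (hr : ∀ z, ∃ U ∈ 𝒰, Metric.ball z r ⊆ U) (n : ℕ) (x : X) :
    ∃ g : Fin n → Set X, (∀ i, g i ∈ 𝒰) ∧
      bowenBall T n x r ⊆ ⋂ i : Fin n, (T^[(i : ℕ)]) ⁻¹' g i := by
  choose U hU𝒰 hball using hr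
  exact ⟨fun i => U (T^[(i : ℕ)] x), fun i => hU𝒰 _,
    fun y hy => mem_iInter.2 fun i => hball _ (Metric.mem_ball'.2 (hy i i.2))⟩

lemma birk_le_of_mem_bowenBall {T : X → X} {f : X → ℝ} {n : ℕ} {x y : X} {r η : ℝ}
    (hf : ∀ a b, dist a b < r → f b ≤ f a + η) (hy : y ∈ bowenBall T n x r) :
    birk T f n y ≤ birk T f n x + n * η :=
  birk_le_of_forall_le_add fun i hi => hf _ _ (hy i hi)

lemma covPn_le_sum_supExpBirk_bowenBall [MeasurableSpace X] [OpensMeasurableSpace X]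
    {T : X → X} (hT : Continuous T) (f : X → ℝ) {𝒰 : Finset (Set X)} (h𝒰 : IsOpenCover 𝒰)
    {r : ℝ} (hr : ∀ z, ∃ U ∈ 𝒰, Metric.ball z r ⊆ U) {n : ℕ} {E : Finset X} {K : Set X}
    (hK : ∀ y ∈ K, ∃ x ∈ E, y ∈ bowenBall T n x r) :
    covPn T f 𝒰 n K ≤ ∑ x ∈ E, supExpBirk T f n (bowenBall T n x r ∩ K) := by
  calc covPn T f 𝒰 n K ≤ ∑ V ∈ E.image (bowenBall T n · r), supExpBirk T f n (V ∩ K) := by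
        refine covPn_le_sum_of_subset_sUnion hT f h𝒰 ?_ ?_ fun y hy => ?_
        · simp only [Finset.mem_image]
          rintro _ ⟨x, -, rfl⟩
          exact (isOpen_bowenBall hT n x r).measurableSet
        · simp only [RefinesIter, Finset.mem_image]
          rintro _ ⟨x, -, rfl⟩
          exact exists_bowenBall_subset_iInter_preimage hr n x
        · obtain ⟨x, hxE, hyx⟩ := hK y hy
          exact ⟨_, Finset.mem_coe.2 (Finset.mem_image_of_mem _ hxE), hyx⟩
    _ ≤ ∑ x ∈ E, supExpBirk T f n (bowenBall T n x r ∩ K) :=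
        Finset.sum_image_le_of_nonneg fun _ _ => supExpBirk_nonneg T f n _

end BowenBall

section Pressure

variable [MetricSpace X] [CompactSpace X]

lemma sum_exp_birk_le_sepPn (T : X → X) (f : C(X, ℝ)) {n : ℕ} {δ : ℝ} (hδ : 0 < δ)
    {K : Set X} {E : Finset X} (hEK : ↑E ⊆ K) (hE : IsDynSeparated T n δ E) :
    ∑ x ∈ E, Real.exp (birk T f n x) ≤ sepPn T f n δ K := by
  obtain ⟨𝒰, h𝒰, hmesh⟩ := exists_isOpenCover_forall_dist_le (X := X) hδ
  refine le_csSup ⟨∑ V ∈ atomCover T 𝒰 n, supExpBirk T f n (V ∩ K), ?_⟩ ⟨E, hEK, hE, rfl⟩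
  rintro _ ⟨E', hE'K, hE', rfl⟩
  exact sum_exp_birk_le_sum_supExpBirk T f n (sUnion_atomCover T h𝒰.2 n) hE'K
    (IsDynSeparated.subsingleton_inter hE' hmesh (refinesIter_atomCover T 𝒰 n))

lemma sepPn_pos (T : X → X) (f : C(X, ℝ)) (n : ℕ) {δ : ℝ} (hδ : 0 < δ) {K : Set X}
    (hK : K.Nonempty) : 0 < sepPn T f n δ K := by
  obtain ⟨y, hy⟩ := hK
  have := sum_exp_birk_le_sepPn T f hδ (by simpa using hy) (isDynSeparated_singleton T n δ y)
  exact (Real.exp_pos _).trans_le (by simpa using this)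

variable [MeasurableSpace X] [OpensMeasurableSpace X] {T : X → X}

lemma covPn_pos (hT : Continuous T) (f : C(X, ℝ)) {𝒰 : Finset (Set X)} (h𝒰 : IsOpenCover 𝒰)
    (n : ℕ) {K : Set X} (hK : K.Nonempty) : 0 < covPn T f 𝒰 n K := by
  obtain ⟨y, hy⟩ := hK
  refine (Real.exp_pos (birk T f n y)).trans_le (le_covPn hT f h𝒰 fun 𝒱 h𝒱 _ => ?_)
  simpa using sum_exp_birk_le_sum_supExpBirk T f n h𝒱.2 (E := {y}) (by simpa using hy)
    fun V _ => (subsingleton_singleton (a := y)).anti (by simp)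

lemma sepPn_le_covPn (hT : Continuous T) (f : C(X, ℝ)) {𝒰 : Finset (Set X)}
    (h𝒰 : IsOpenCover 𝒰) {δ : ℝ} (hmesh : ∀ U ∈ 𝒰, ∀ a ∈ U, ∀ b ∈ U, dist a b ≤ δ) (n : ℕ)
    (K : Set X) : sepPn T f n δ K ≤ covPn T f 𝒰 n K := by
  refine Real.sSup_le ?_ (le_covPn hT f h𝒰 fun 𝒱 _ _ =>
    Finset.sum_nonneg fun _ _ => supExpBirk_nonneg T f n _)
  rintro _ ⟨E, hEK, hE, rfl⟩
  exact le_covPn hT f h𝒰 fun 𝒱 h𝒱 h𝒱𝒰 =>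
    sum_exp_birk_le_sum_supExpBirk T f n h𝒱.2 hEK (IsDynSeparated.subsingleton_inter hE hmesh h𝒱𝒰)

lemma exists_covPn_le_exp_mul_sepPn (hT : Continuous T) (f : C(X, ℝ)) {𝒰 : Finset (Set X)}
    (h𝒰 : IsOpenCover 𝒰) {η : ℝ} (hη : 0 < η) :
    ∃ δ > 0, ∀ n K, covPn T f 𝒰 n K ≤ Real.exp (n * η) * sepPn T f n δ K := by
  obtain ⟨r₁, hr₁, hleb⟩ := lebesgue_number_lemma_of_metric_sUnion isCompact_univ h𝒰.1 h𝒰.2.ge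
  obtain ⟨r₂, hr₂, hunif⟩ := Metric.uniformContinuous_iff.1
    (CompactSpace.uniformContinuous_of_continuous f.continuous) η hη
  set r := min r₁ r₂
  have hr : 0 < r := lt_min hr₁ hr₂
  have hosc : ∀ a b, dist a b < r → f b ≤ f a + η := fun a b hab => by
    have := hunif (hab.trans_le (min_le_right _ _))
    linarith [(abs_sub_lt_iff.1 (Real.dist_eq (f a) (f b) ▸ this)).2]
  have hr𝒰 : ∀ z, ∃ U ∈ 𝒰, Metric.ball z r ⊆ U := fun z => by
    obtain ⟨U, hU, hzU⟩ := hleb z (mem_univ z)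
    exact ⟨U, hU, (Metric.ball_subset_ball (min_le_left _ _)).trans hzU⟩
  refine ⟨r / 2, half_pos hr, fun n K => ?_⟩
  obtain ⟨E, hEK, hE, hspan⟩ := exists_isDynSeparated_forall_dist_le T (half_pos hr) n K
  have hK : ∀ y ∈ K, ∃ x ∈ E, y ∈ bowenBall T n x r := fun y hy => by
    obtain ⟨x, hxE, hxy⟩ := hspan y hy
    exact ⟨x, hxE, fun i hi => (hxy i hi).trans_lt (half_lt_self hr)⟩
  calc covPn T f 𝒰 n K ≤ ∑ x ∈ E, supExpBirk T f n (bowenBall T n x r ∩ K) :=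
        covPn_le_sum_supExpBirk_bowenBall hT f h𝒰 hr𝒰 hK
    _ ≤ ∑ x ∈ E, Real.exp (n * η) * Real.exp (birk T f n x) := by
        refine Finset.sum_le_sum fun x _ => ?_
        rw [← Real.exp_add, add_comm]
        exact supExpBirk_le fun y hy => birk_le_of_mem_bowenBall hosc hy.1
    _ ≤ Real.exp (n * η) * sepPn T f n (r / 2) K := by
        rw [← Finset.mul_sum]
        exact mul_le_mul_of_nonneg_left (sum_exp_birk_le_sepPn T f (half_pos hr) hEK hE)
          (Real.exp_pos _).le

end Pressure

lemma EReal.le_of_forall_pos_le_coe_add {a b : EReal} (h : ∀ η : ℝ, 0 < η → a ≤ η + b) :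
    a ≤ b := by
  refine EReal.le_of_forall_lt_iff_le.1 fun z hz => ?_
  induction b using EReal.rec with
  | bot => simp [show a = ⊥ by simpa using h 1 one_pos]
  | coe c =>
    have := h (z - c) (_root_.sub_pos.2 (EReal.coe_lt_coe_iff.1 hz))
    rwa [← EReal.coe_add, _root_.sub_add_cancel] at this
  | top => exact absurd hz (not_lt.2 le_top)

lemma EReal.limsup_le_coe_add_limsup {α : Type*} {l : Filter α} [l.NeBot] {u v : α → ℝ} {η : ℝ}
    (h : ∀ a, u a ≤ η + v a) :
    l.limsup (fun a => (u a : EReal)) ≤ η + l.limsup fun a => (v a : EReal) := by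
  calc l.limsup (fun a => (u a : EReal))
      ≤ l.limsup ((fun _ => (η : EReal)) + fun a => (v a : EReal)) :=
        limsup_le_limsup (.of_forall fun a => show (u a : EReal) ≤ η + v a by exact_mod_cast h a)
    _ ≤ l.limsup (fun _ => (η : EReal)) + l.limsup fun a => (v a : EReal) :=
        EReal.limsup_add_le (by simp) (by simp)
    _ = η + l.limsup fun a => (v a : EReal) := by rw [limsup_const]

lemma log_div_le_add_log_div {a b η : ℝ} (hb : 0 < b) (hη : 0 ≤ η) (n : ℕ)
    (hba : b ≤ Real.exp (n * η) * a) : Real.log b / n ≤ η + Real.log a / n := by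
  rcases n.eq_zero_or_pos with rfl | hn
  · simpa using hη
  have ha : 0 < a := pos_of_mul_pos_right (hb.trans_le hba) (Real.exp_pos _).le
  have hlog := Real.log_le_log hb hba
  rw [Real.log_mul (Real.exp_ne_zero _) ha.ne', Real.log_exp] at hlog
  have hn' : (0 : ℝ) < n := Nat.cast_pos.2 hn
  rw [div_le_iff₀ hn', add_mul, div_mul_cancel₀ _ hn'.ne']
  linarith

/-- For a TDS `(X,T)` and `f ∈ C(X,ℝ)`, for each `x ∈ X` and
`ε > 0`, `P_s(T,f,x,ε) = sup_𝒰 limsup_n (1/n) log P_n(T,f,𝒰,T^{-n}W^s_ε(x,T))`,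
the sup being over finite open covers of `X`. -/
theorem stmt4 [MetricSpace X] [CompactSpace X] [MeasurableSpace X] [BorelSpace X]
    (T : X ≃ₜ X) (f : C(X, ℝ)) (x : X) (ε : ℝ) (hε : 0 < ε) :
    Ps ⇑T ⇑f x ε =
      ⨆ (𝒰 : Finset (Set X)) (_ : IsOpenCover 𝒰), atTop.limsup fun n : ℕ =>
        ((Real.log (covPn ⇑T ⇑f 𝒰 n (((⇑T)^[n]) ⁻¹' epsStable ⇑T ε x)) / n : ℝ) : EReal) := by
  have hK : ∀ n, (((⇑T)^[n]) ⁻¹' epsStable ⇑T ε x).Nonempty := fun n =>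
    Nonempty.preimage ⟨x, fun m => by simpa using hε.le⟩ (T.surjective.iterate n)
  rw [Ps]
  apply le_antisymm
  · refine iSup₂_le fun δ hδ => ?_
    obtain ⟨𝒰, h𝒰, hmesh⟩ := exists_isOpenCover_forall_dist_le (X := X) hδ
    refine le_iSup₂_of_le 𝒰 h𝒰 (limsup_le_limsup (.of_forall fun n => ?_))
    exact EReal.coe_le_coe (div_le_div_of_nonneg_right (Real.log_le_log
      (sepPn_pos _ f n hδ (hK n)) (sepPn_le_covPn T.continuous f h𝒰 hmesh n _)) n.cast_nonneg)
  · refine iSup₂_le fun 𝒰 h𝒰 => EReal.le_of_forall_pos_le_coe_add fun η hη => ?_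
    obtain ⟨δ, hδ, hcov⟩ := exists_covPn_le_exp_mul_sepPn T.continuous f h𝒰 hη
    refine (EReal.limsup_le_coe_add_limsup fun n => ?_).trans
      (add_le_add le_rfl (le_iSup₂_of_le δ hδ le_rfl))
    exact log_div_le_add_log_div (covPn_pos T.continuous f h𝒰 n (hK n)) hη.le n (hcov n _)
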